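/- Suppose d = 3 and k ∈ (3/2, 2]. Assume u ∈ L²(ℝ³) ∩ Ḣ¹(ℝ³), ρ ∈ L^∞(ℝ³) with ρ ≥ 0, and there are constants C₀ such that ∫ ρ|u|² dx ≤ C₀ and ‖ρ − 1‖_{L^k(ℝ³)} ≤ C₀. Then ‖u‖²_{L²(ℝ³)} ≤ C₀' (1 + ‖u‖_{L²}^{2 − 3/k} ‖∇u‖_{L²}^{3/k}) for a constant C₀' depending only on C₀ and k. Consequently ‖u‖_{L²} is bounded by a constant depending only on C₀, k and ‖∇u‖_{L²}. -/

import Mathlib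

/-!
Off the set `A = {ρ ≤ 1/2}` one has `|u|² ≤ 2ρ|u|²`, so `‖u‖₂² ≤ 2C₀ + ∫_A |u|²`. Chebyshev's
inequality gives `|A| ≤ 2ᵏ‖ρ - 1‖ₖᵏ ≤ (2C₀)ᵏ`, and Hölder gives `∫_A |u|² ≤ |A|^{1/3} ‖u‖₃²`.
The Gagliardo–Nirenberg–Sobolev inequality `‖φ‖_{3/2} ≲ ‖∇φ‖₁` applied to `φ = |u|²` yields
`‖u‖₃² ≲ ‖u‖₂ ‖∇u‖₂`. Mathlib proves it only for compactly supported `C¹` functions; the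
grid-lines argument also works for differentiable integrable `φ`, because on almost every
coordinate line `φ` and its derivative are integrable, so `φ` vanishes at `-∞`.
Altogether `‖u‖₂² ≤ 2C₀ + K ‖u‖₂ ‖∇u‖₂`, and both claims follow from this by elementary
inequalities, comparing `‖u‖₂` with `‖∇u‖₂`.
-/

open MeasureTheory ENNReal Set Function Filter
open scoped NNReal

theorem MeasureTheory.Integrable.ae_integrable_update {E : Type*} [NormedAddCommGroup E] {n : ℕ}
    {f : (Fin (n + 1) → ℝ) → E} (hf : Integrable f) (i : Fin (n + 1)) :
    ∀ᵐ x, Integrable (fun t => f (update x i t)) := by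
  let e := MeasurableEquiv.piFinSuccAbove (fun _ => ℝ) i
  have he : MeasurePreserving e := volume_preserving_piFinSuccAbove (fun _ => ℝ) i
  have hfe : Integrable (f ∘ e.symm) (volume.prod volume) := by
    rw [← Measure.volume_eq_prod]
    exact ((he.symm e).integrable_comp_emb e.symm.measurableEmbedding).2 hf
  filter_upwards [he.quasiMeasurePreserving.ae
    (Measure.quasiMeasurePreserving_snd.ae hfe.prod_left_ae)] with x hx
  have hupdate : ∀ t, e.symm (t, (e x).2) = update x i t := fun t =>
    Fin.insertNth_removeNth (α := fun _ => ℝ) i t x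
  simpa only [comp_apply, hupdate] using hx

section

variable {F : Type*} [NormedAddCommGroup F] [NormedSpace ℝ F]

theorem enorm_le_lintegral_enorm_deriv [CompleteSpace F] {g : ℝ → F} (hg : Differentiable ℝ g)
    (hgi : Integrable g) (s : ℝ) : ‖g s‖ₑ ≤ ∫⁻ t, ‖deriv g t‖ₑ := by
  by_cases h : ∫⁻ t, ‖deriv g t‖ₑ = ∞
  · simp [h]
  have hg' : Integrable (deriv g) := ⟨aestronglyMeasurable_deriv g _, lt_top_iff_ne_top.2 h⟩
  have hderiv : ∀ t ∈ Iic s, HasDerivAt g (deriv g t) t := fun t _ => (hg t).hasDerivAt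
  have hftc := integral_Iic_of_hasDerivAt_of_tendsto' hderiv hg'.integrableOn
    (tendsto_zero_of_hasDerivAt_of_integrableOn_Iic hderiv hg'.integrableOn hgi.integrableOn)
  calc ‖g s‖ₑ = ‖∫ t in Iic s, deriv g t‖ₑ := by rw [hftc, sub_zero]
    _ ≤ ∫⁻ t in Iic s, ‖deriv g t‖ₑ := enorm_integral_le_lintegral_enorm _
    _ ≤ ∫⁻ t, ‖deriv g t‖ₑ := setLIntegral_le_lintegral _ _

theorem ae_enorm_le_lintegral_enorm_fderiv_update [CompleteSpace F] {n : ℕ}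
    {f : (Fin (n + 1) → ℝ) → F} (hf : Differentiable ℝ f) (hfi : Integrable f) (i : Fin (n + 1)) :
    ∀ᵐ x, ‖f x‖ₑ ≤ ∫⁻ t, ‖fderiv ℝ f (update x i t)‖ₑ := by
  filter_upwards [hfi.ae_integrable_update i] with x hx
  have hg : Differentiable ℝ (f ∘ update x i) :=
    hf.comp fun t => (hasDerivAt_update x i t).differentiableAt
  calc ‖f x‖ₑ = ‖(f ∘ update x i) (x i)‖ₑ := by simp
    _ ≤ ∫⁻ t, ‖deriv (f ∘ update x i) t‖ₑ := enorm_le_lintegral_enorm_deriv hg hx _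
    _ ≤ ∫⁻ t, ‖fderiv ℝ f (update x i t)‖ₑ := by
      refine lintegral_mono fun t => ?_
      calc ‖deriv (f ∘ update x i) t‖ₑ = ‖fderiv ℝ f (update x i t) (deriv (update x i) t)‖ₑ := by
            rw [fderiv_comp_deriv _ (hf _) (hasDerivAt_update x i t).differentiableAt]
        _ ≤ ‖fderiv ℝ f (update x i t)‖ₑ * ‖deriv (update x i) t‖ₑ :=
            ContinuousLinearMap.le_opENorm _ _
        _ ≤ ‖fderiv ℝ f (update x i t)‖ₑ := by simp [deriv_update, Pi.enorm_single]

theorem lintegral_pow_le_pow_lintegral_fderiv_of_integrable [CompleteSpace F] {n : ℕ} {p : ℝ}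
    (hp : Real.HolderConjugate (n + 1) p) {f : (Fin (n + 1) → ℝ) → F}
    (hf : Differentiable ℝ f) (hfi : Integrable f) :
    ∫⁻ x, ‖f x‖ₑ ^ p ≤ (∫⁻ x, ‖fderiv ℝ f x‖ₑ) ^ p := by
  have hp' : Real.HolderConjugate (Fintype.card (Fin (n + 1))) p := by simpa using hp
  calc ∫⁻ x, ‖f x‖ₑ ^ p
      = ∫⁻ x, ∏ _i : Fin (n + 1), ‖f x‖ₑ ^ (n : ℝ)⁻¹ := by
        refine lintegral_congr fun x => ?_
        rw [Finset.prod_const, Finset.card_univ, Fintype.card_fin, ← ENNReal.rpow_natCast,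
          ← ENNReal.rpow_mul, hp.conjugate_eq]
        congr 1
        push_cast
        rw [add_sub_cancel_right]
        field_simp
    _ ≤ ∫⁻ x, ∏ i, (∫⁻ t, ‖fderiv ℝ f (update x i t)‖ₑ) ^ (n : ℝ)⁻¹ := by
        refine lintegral_mono_ae ?_
        filter_upwards [ae_all_iff.2 fun i => ae_enorm_le_lintegral_enorm_fderiv_update hf hfi i]
          with x hx
        exact Finset.prod_le_prod' fun i _ => ENNReal.rpow_le_rpow (hx i) (by positivity)
    _ ≤ (∫⁻ x, ‖fderiv ℝ f x‖ₑ) ^ p := by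
        simpa [volume_pi] using lintegral_prod_lintegral_pow_le (fun _ => volume) hp'
          (measurable_fderiv ℝ f).enorm

theorem exists_eLpNorm_le_eLpNorm_fderiv_one_of_integrable [CompleteSpace F] {n : ℕ} {p : ℝ≥0}
    (hp : NNReal.HolderConjugate (n + 1) p) :
    ∃ C : ℝ≥0, ∀ f : EuclideanSpace ℝ (Fin (n + 1)) → F, Differentiable ℝ f → Integrable f →
      eLpNorm f p volume ≤ C * eLpNorm (fderiv ℝ f) 1 volume := by
  let e := MeasurableEquiv.toLp 2 (Fin (n + 1) → ℝ)
  let L := (EuclideanSpace.equiv (Fin (n + 1)) ℝ).symm.toContinuousLinearMap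
  have he : MeasurePreserving e :=
    (EuclideanSpace.volume_preserving_symm_measurableEquiv_toLp _).symm _
  have hL : ⇑L = ⇑e := rfl
  refine ⟨‖L‖₊, fun f hf hfi => ?_⟩
  have h0p : (0 : ℝ) < p := hp.coe.symm.pos
  rw [eLpNorm_one_eq_lintegral_enorm, ← ENNReal.rpow_le_rpow_iff h0p,
    eLpNorm_nnreal_pow_eq_lintegral hp.symm.pos.ne']
  have hfL : Differentiable ℝ (f ∘ L) := hf.comp L.differentiable
  have hfLi : Integrable (f ∘ L) := by
    rw [hL]; exact (he.integrable_comp_emb e.measurableEmbedding).2 hfi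
  have hpR : Real.HolderConjugate (n + 1) p := by exact_mod_cast hp.coe
  calc ∫⁻ x, ‖f x‖ₑ ^ (p : ℝ)
      = ∫⁻ y, ‖(f ∘ L) y‖ₑ ^ (p : ℝ) :=
        (he.lintegral_comp_emb e.measurableEmbedding (fun x => ‖f x‖ₑ ^ (p : ℝ))).symm
    _ ≤ (∫⁻ y, ‖fderiv ℝ (f ∘ L) y‖ₑ) ^ (p : ℝ) :=
        lintegral_pow_le_pow_lintegral_fderiv_of_integrable hpR hfL hfLi
    _ ≤ (∫⁻ y, ‖fderiv ℝ f (L y)‖ₑ * ‖L‖ₑ) ^ (p : ℝ) := by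
        gcongr with y
        rw [fderiv_comp y (hf _) L.differentiableAt, L.fderiv]
        exact ContinuousLinearMap.opENorm_comp_le _ _
    _ = (‖L‖₊ * ∫⁻ x, ‖fderiv ℝ f x‖ₑ) ^ (p : ℝ) := by
        rw [lintegral_mul_const' _ _ enorm_ne_top, mul_comm, hL,
          he.lintegral_comp_emb e.measurableEmbedding (fun x => ‖fderiv ℝ f x‖ₑ)]
        rfl

end

theorem exists_eLpNorm_three_sq_le {G : Type*} [NormedAddCommGroup G] [InnerProductSpace ℝ G]
    [CompleteSpace G] :
    ∃ C : ℝ≥0, ∀ u : EuclideanSpace ℝ (Fin 3) → G, Differentiable ℝ u → MemLp u 2 →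
      eLpNorm u 3 volume ^ 2
        ≤ C * eLpNorm u 2 volume * eLpNorm (fun x => ‖fderiv ℝ u x‖) 2 volume := by
  have hp : NNReal.HolderConjugate ((2 : ℕ) + 1) (3 / 2) := by
    rw [NNReal.holderConjugate_iff]; norm_num
  obtain ⟨C, hC⟩ := exists_eLpNorm_le_eLpNorm_fderiv_one_of_integrable (F := ℝ) hp
  refine ⟨C * 2, fun u hu hu2 => ?_⟩
  have hφ : ∀ x, HasFDerivAt (fun y => ‖u y‖ ^ 2) (2 • (innerSL ℝ (u x)).comp (fderiv ℝ u x)) x :=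
    fun x => (hu x).hasFDerivAt.norm_sq
  have hφ_norm : eLpNorm (fun x => ‖u x‖ ^ 2) (3 / 2 : ℝ≥0) volume = eLpNorm u 3 volume ^ 2 := by
    have h3 : (3 / 2 : ℝ≥0∞) * 2 = 3 := ENNReal.div_mul_cancel two_ne_zero ofNat_ne_top
    simpa [h3] using eLpNorm_norm_rpow (p := ((3 / 2 : ℝ≥0) : ℝ≥0∞)) (μ := volume) u two_pos
  have hDφ : ∀ x, ‖fderiv ℝ (fun y => ‖u y‖ ^ 2) x‖ ≤ 2 * (‖u x‖ * ‖fderiv ℝ u x‖) := by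
    intro x
    rw [(hφ x).fderiv]
    calc ‖2 • (innerSL ℝ (u x)).comp (fderiv ℝ u x)‖
        ≤ 2 * ‖(innerSL ℝ (u x)).comp (fderiv ℝ u x)‖ := by simpa using norm_nsmul_le (n := 2)
      _ ≤ 2 * (‖innerSL ℝ (u x)‖ * ‖fderiv ℝ u x‖) := by
        gcongr; exact ContinuousLinearMap.opNorm_comp_le _ _
      _ = 2 * (‖u x‖ * ‖fderiv ℝ u x‖) := by rw [innerSL_apply_norm]
  have hDu : AEStronglyMeasurable (fun x => ‖fderiv ℝ u x‖) :=
    (measurable_fderiv ℝ u).norm.aestronglyMeasurable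
  calc eLpNorm u 3 volume ^ 2 = eLpNorm (fun x => ‖u x‖ ^ 2) (3 / 2 : ℝ≥0) volume := hφ_norm.symm
    _ ≤ C * eLpNorm (fderiv ℝ (fun x => ‖u x‖ ^ 2)) 1 volume :=
        hC _ (fun x => (hφ x).differentiableAt) (hu2.integrable_norm_pow two_ne_zero)
    _ ≤ C * (2 * eLpNorm u 2 volume * eLpNorm (fun x => ‖fderiv ℝ u x‖) 2 volume) := by
        gcongr
        refine (eLpNorm_mono_real hDφ).trans ?_
        refine eLpNorm_le_eLpNorm_mul_eLpNorm_of_nnnorm hu.continuous.aestronglyMeasurable hDu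
          (fun a r => 2 * (‖a‖ * r)) 2 (Eventually.of_forall fun x => ?_)
        simp [nnnorm_mul, mul_assoc]
    _ = C * 2 * eLpNorm u 2 volume * eLpNorm (fun x => ‖fderiv ℝ u x‖) 2 volume := by
        ring

section

variable {α F : Type*} [MeasurableSpace α] {μ : Measure α} [NormedAddCommGroup F]

theorem sq_eLpNorm_two_eq_lintegral (f : α → F) :
    eLpNorm f 2 μ ^ 2 = ∫⁻ x, ‖f x‖ₑ ^ 2 ∂μ := by
  simpa using eLpNorm_nnreal_pow_eq_lintegral (f := f) (μ := μ) (p := 2) two_ne_zero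

theorem measure_le_half_le_eLpNorm_sub_one {ρ : α → ℝ} (hρ : AEStronglyMeasurable ρ μ) {k : ℝ}
    (hk : 0 < k) :
    μ {x | ρ x ≤ 1 / 2} ≤ 2 ^ k * eLpNorm (fun x => ρ x - 1) (ENNReal.ofReal k) μ ^ k := by
  have hsub : {x | ρ x ≤ 1 / 2} ⊆ {x | 2⁻¹ ≤ ‖ρ x - 1‖ₑ} := by
    intro x hx
    rw [mem_ofPred_eq, Real.enorm_eq_ofReal_abs, ← ofReal_ofNat,
      ← ENNReal.ofReal_inv_of_pos two_pos, abs_sub_comm]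
    exact ENNReal.ofReal_le_ofReal (le_abs.2 (Or.inl (by linarith [hx.out])))
  calc μ {x | ρ x ≤ 1 / 2} ≤ μ {x | 2⁻¹ ≤ ‖ρ x - 1‖ₑ} := measure_mono hsub
    _ ≤ 2⁻¹⁻¹ ^ (ENNReal.ofReal k).toReal
          * eLpNorm (fun x => ρ x - 1) (ENNReal.ofReal k) μ ^ (ENNReal.ofReal k).toReal :=
        meas_ge_le_mul_pow_eLpNorm_enorm μ (by simpa using hk) ofReal_ne_top
          (hρ.sub aestronglyMeasurable_const) (by simp) (by simp)
    _ = 2 ^ k * eLpNorm (fun x => ρ x - 1) (ENNReal.ofReal k) μ ^ k := by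
        rw [inv_inv, ENNReal.toReal_ofReal hk.le]

theorem sq_eLpNorm_two_le_add_restrict {f : α → F} (hf : AEStronglyMeasurable f μ) {ρ : α → ℝ}
    {s : Set α} (hs : MeasurableSet s) (hρs : {x | ρ x ≤ 1 / 2} ⊆ s) :
    eLpNorm f 2 μ ^ 2
      ≤ 2 * ∫⁻ x, ENNReal.ofReal (ρ x) * ‖f x‖ₑ ^ 2 ∂μ + eLpNorm f 2 (μ.restrict s) ^ 2 := by
  have hpt : ∀ x, ‖f x‖ₑ ^ 2
      ≤ 2 * (ENNReal.ofReal (ρ x) * ‖f x‖ₑ ^ 2) + s.indicator (fun x => ‖f x‖ₑ ^ 2) x := by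
    intro x
    by_cases hx : x ∈ s
    · rw [indicator_of_mem hx]; exact le_add_self
    have hρx : 1 ≤ 2 * ENNReal.ofReal (ρ x) := by
      rw [← ofReal_ofNat, ← ENNReal.ofReal_mul zero_le_two, ← ENNReal.ofReal_one]
      have hρx : 1 / 2 < ρ x := not_le.1 fun h => hx (hρs h)
      exact ENNReal.ofReal_le_ofReal (by linarith)
    rw [indicator_of_notMem hx, add_zero, ← mul_assoc]
    exact le_mul_of_one_le_left' hρx
  rw [sq_eLpNorm_two_eq_lintegral, sq_eLpNorm_two_eq_lintegral, ← lintegral_indicator hs,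
    ← lintegral_const_mul' _ _ ofNat_ne_top,
    ← lintegral_add_right' _ ((hf.enorm.pow_const 2).indicator hs)]
  exact lintegral_mono hpt

theorem sq_eLpNorm_restrict_le {f : α → F} (hf : AEStronglyMeasurable f μ) (s : Set α) :
    eLpNorm f 2 (μ.restrict s) ^ 2 ≤ μ s ^ (3⁻¹ : ℝ) * eLpNorm f 3 μ ^ 2 := by
  have h := eLpNorm_le_eLpNorm_mul_rpow_measure_univ (p := 2) (q := 3) (by norm_num)
    (hf.restrict (s := s))
  rw [Measure.restrict_apply_univ] at h
  calc eLpNorm f 2 (μ.restrict s) ^ 2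
      ≤ (eLpNorm f 3 μ * μ s ^ (1 / (2 : ℝ≥0∞).toReal - 1 / (3 : ℝ≥0∞).toReal)) ^ 2 := by
        gcongr
        exact h.trans (mul_le_mul_left (eLpNorm_mono_measure f Measure.restrict_le_self) _)
    _ = μ s ^ (3⁻¹ : ℝ) * eLpNorm f 3 μ ^ 2 := by
        rw [mul_pow, mul_comm, ← ENNReal.rpow_natCast, ← ENNReal.rpow_mul]
        norm_num

theorem lintegral_ofReal_mul_enorm_sq {f : α → F} {ρ : α → ℝ} (hf : MemLp f 2 μ)
    (hρ : MemLp ρ ∞ μ) (hρ0 : 0 ≤ᵐ[μ] ρ) :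
    ∫⁻ x, ENNReal.ofReal (ρ x) * ‖f x‖ₑ ^ 2 ∂μ = ENNReal.ofReal (∫ x, ρ x * ‖f x‖ ^ 2 ∂μ) := by
  have hint : Integrable (fun x => ρ x * ‖f x‖ ^ 2) μ :=
    (hf.integrable_norm_pow two_ne_zero).mul_of_top_right hρ
  rw [ofReal_integral_eq_lintegral_ofReal hint
    (hρ0.mono fun x hx => mul_nonneg hx (sq_nonneg _))]
  refine lintegral_congr_ae (hρ0.mono fun x hx => ?_)
  dsimp only
  rw [ENNReal.ofReal_mul hx, ENNReal.ofReal_pow (norm_nonneg _), ofReal_norm]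

end

theorem exists_sq_eLpNorm_le_add_mul {G : Type*} [NormedAddCommGroup G] [InnerProductSpace ℝ G]
    [CompleteSpace G] (k C₀ : ℝ) (hk : 0 < k) (hC₀ : 0 ≤ C₀) :
    ∃ K : ℝ, 0 ≤ K ∧ ∀ (u : EuclideanSpace ℝ (Fin 3) → G) (ρ : EuclideanSpace ℝ (Fin 3) → ℝ),
      MemLp u 2 → Differentiable ℝ u → MemLp (fun x => ‖fderiv ℝ u x‖) 2 →
      MemLp ρ ∞ → (∀ x, 0 ≤ ρ x) →
      (∫ x, ρ x * ‖u x‖ ^ 2) ≤ C₀ →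
      eLpNorm (fun x => ρ x - 1) (ENNReal.ofReal k) volume ≤ ENNReal.ofReal C₀ →
      (eLpNorm u 2 volume).toReal ^ 2 ≤ 2 * C₀ + K * (eLpNorm u 2 volume).toReal
        * (eLpNorm (fun x => ‖fderiv ℝ u x‖) 2 volume).toReal := by
  obtain ⟨C, hC⟩ := exists_eLpNorm_three_sq_le (G := G)
  set V : ℝ≥0∞ := (2 ^ k * ENNReal.ofReal C₀ ^ k) ^ (3⁻¹ : ℝ)
  refine ⟨V.toReal * C, by positivity, fun u ρ hu hud hDu hρ hρ0 hE hR => ?_⟩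
  let s := toMeasurable volume {x | ρ x ≤ 1 / 2}
  have hs : volume s ^ (3⁻¹ : ℝ) ≤ V := by
    rw [measure_toMeasurable]
    refine ENNReal.rpow_le_rpow ?_ (by norm_num)
    exact (measure_le_half_le_eLpNorm_sub_one hρ.1 hk).trans (by gcongr)
  have hE' : ∫⁻ x, ENNReal.ofReal (ρ x) * ‖u x‖ₑ ^ 2 ≤ ENNReal.ofReal C₀ := by
    rw [lintegral_ofReal_mul_enorm_sq hu hρ (Eventually.of_forall hρ0)]
    exact ENNReal.ofReal_le_ofReal hE
  have key : eLpNorm u 2 volume ^ 2 ≤ 2 * ENNReal.ofReal C₀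
      + V * C * eLpNorm u 2 volume * eLpNorm (fun x => ‖fderiv ℝ u x‖) 2 volume :=
    calc eLpNorm u 2 volume ^ 2
        ≤ 2 * (∫⁻ x, ENNReal.ofReal (ρ x) * ‖u x‖ₑ ^ 2) + eLpNorm u 2 (volume.restrict s) ^ 2 :=
          sq_eLpNorm_two_le_add_restrict hud.continuous.aestronglyMeasurable
            (measurableSet_toMeasurable volume _) (subset_toMeasurable volume _)
      _ ≤ 2 * ENNReal.ofReal C₀ + volume s ^ (3⁻¹ : ℝ) * eLpNorm u 3 volume ^ 2 := by
          gcongr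
          exact sq_eLpNorm_restrict_le hud.continuous.aestronglyMeasurable s
      _ ≤ 2 * ENNReal.ofReal C₀
          + V * (C * eLpNorm u 2 volume * eLpNorm (fun x => ‖fderiv ℝ u x‖) 2 volume) := by
          gcongr
          exact hC u hud hu
      _ = _ := by ring
  have hX := hu.eLpNorm_ne_top
  have hD := hDu.eLpNorm_ne_top
  have hV : V ≠ ∞ := by finiteness
  have := ENNReal.toReal_mono (by finiteness) key
  rw [ENNReal.toReal_add (by finiteness) (by finiteness)] at this
  simpa [ENNReal.toReal_ofReal hC₀] using this

theorem sq_le_mul_one_add_rpow_mul_rpow {a K x d α β : ℝ} (ha : 0 ≤ a) (hK : 0 ≤ K) (hx : 0 ≤ x)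
    (hd : 0 ≤ d) (hα : 0 ≤ α) (hβ : 1 ≤ β) (hαβ : α + β = 2) (h : x ^ 2 ≤ a + K * x * d) :
    x ^ 2 ≤ (2 * a + K ^ 2 + K + 1) * (1 + x ^ α * d ^ β) := by
  have hP : 0 ≤ x ^ α * d ^ β := by positivity
  rcases le_total x d with hxd | hdx
  · have hmix : x * d ≤ x ^ α * d ^ β :=
      calc x * d = x ^ α * x ^ (1 - α) * d := by
            rw [← Real.rpow_add' hx (by linarith), add_sub_cancel, Real.rpow_one]
        _ ≤ x ^ α * d ^ (1 - α) * d := by gcongr; linarith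
        _ = x ^ α * d ^ β := by
            rw [mul_assoc, ← Real.rpow_add_one' hd (by linarith)]
            congr 2
            linarith
    nlinarith [mul_le_mul_of_nonneg_left hmix hK, mul_nonneg ha hP, mul_nonneg (sq_nonneg K) hP]
  · have hsq : d ^ 2 ≤ x ^ α * d ^ β :=
      calc d ^ 2 = d ^ α * d ^ β := by
            rw [← Real.rpow_add' hd (by linarith), hαβ, Real.rpow_two]
        _ ≤ x ^ α * d ^ β := by gcongr
    nlinarith [sq_nonneg (x - K * d), mul_le_mul_of_nonneg_left hsq (sq_nonneg K),
      mul_nonneg ha hP, mul_nonneg hK hP]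

theorem le_add_of_sq_le_add_mul {a K x d D : ℝ} (ha : 0 ≤ a) (hK : 0 ≤ K) (hd : 0 ≤ d)
    (hdD : d ≤ D) (h : x ^ 2 ≤ a + K * x * d) : x ≤ K * D + a + 1 := by
  by_contra! hlt
  have hx : 1 < x := by nlinarith [mul_nonneg hK hd]
  nlinarith [mul_le_mul_of_nonneg_left hdD (mul_nonneg hK (zero_le_one.trans hx.le)),
    mul_lt_mul_of_pos_left hlt (zero_lt_one.trans hx), mul_le_mul_of_nonneg_left hx.le ha]

/-- in `ℝ³`, if `∫ ρ|u|² ≤ C₀`, `‖ρ − 1‖_{L^k} ≤ C₀` with `k ∈ (3/2, 2]`,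
`ρ ≥ 0` bounded, and `u ∈ L² ∩ Ḣ¹`, then
`‖u‖²_{L²} ≤ C₀' (1 + ‖u‖_{L²}^{2−3/k} ‖∇u‖_{L²}^{3/k})` with `C₀'` depending only on
`C₀` and `k`; consequently `‖u‖_{L²}` is bounded in terms of `C₀`, `k` and `‖∇u‖_{L²}`. -/
theorem l2_bound_from_energy
    (k C₀ : ℝ) (hk : 3/2 < k ∧ k ≤ 2) (hC₀ : 0 < C₀) :
    (∃ C' : ℝ, 0 < C' ∧
      ∀ (u : EuclideanSpace ℝ (Fin 3) → EuclideanSpace ℝ (Fin 3))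
        (ρ : EuclideanSpace ℝ (Fin 3) → ℝ),
        MemLp u 2 → Differentiable ℝ u → MemLp (fun x => ‖fderiv ℝ u x‖) 2 →
        MemLp ρ ∞ → (∀ x, 0 ≤ ρ x) →
        (∫ x, ρ x * ‖u x‖^2) ≤ C₀ →
        eLpNorm (fun x => ρ x - 1) (ENNReal.ofReal k) volume ≤ ENNReal.ofReal C₀ →
        ((eLpNorm u 2 volume).toReal) ^ 2
          ≤ C' * (1 + ((eLpNorm u 2 volume).toReal) ^ (2 - 3/k) *
              ((eLpNorm (fun x => ‖fderiv ℝ u x‖) 2 volume).toReal) ^ (3/k))) ∧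
    (∀ D : ℝ, 0 ≤ D → ∃ B : ℝ, 0 < B ∧
      ∀ (u : EuclideanSpace ℝ (Fin 3) → EuclideanSpace ℝ (Fin 3))
        (ρ : EuclideanSpace ℝ (Fin 3) → ℝ),
        MemLp u 2 → Differentiable ℝ u → MemLp (fun x => ‖fderiv ℝ u x‖) 2 →
        MemLp ρ ∞ → (∀ x, 0 ≤ ρ x) →
        (∫ x, ρ x * ‖u x‖^2) ≤ C₀ →
        eLpNorm (fun x => ρ x - 1) (ENNReal.ofReal k) volume ≤ ENNReal.ofReal C₀ →
        (eLpNorm (fun x => ‖fderiv ℝ u x‖) 2 volume).toReal ≤ D →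
        (eLpNorm u 2 volume).toReal ≤ B) := by
  have hk0 : 0 < k := by linarith
  obtain ⟨K, hK, hkey⟩ :=
    exists_sq_eLpNorm_le_add_mul (G := EuclideanSpace ℝ (Fin 3)) k C₀ hk0 hC₀.le
  have hα : 0 ≤ 2 - 3 / k := sub_nonneg.2 ((div_le_iff₀ hk0).2 (by linarith))
  have hβ : 1 ≤ 3 / k := (le_div_iff₀ hk0).2 (by linarith)
  refine ⟨⟨2 * (2 * C₀) + K ^ 2 + K + 1, by positivity, fun u ρ hu hud hDu hρ hρ0 hE hR => ?_⟩,
    fun D hD => ⟨K * D + 2 * C₀ + 1, by positivity, fun u ρ hu hud hDu hρ hρ0 hE hR hDD => ?_⟩⟩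
  · exact sq_le_mul_one_add_rpow_mul_rpow (by positivity) hK toReal_nonneg toReal_nonneg hα hβ
      (sub_add_cancel _ _) (hkey u ρ hu hud hDu hρ hρ0 hE hR)
  · exact le_add_of_sq_le_add_mul (by positivity) hK toReal_nonneg hDD
      (hkey u ρ hu hud hDu hρ hρ0 hE hR)
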